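/- arXiv:1211.1890 — 3 statements merged into one kernel-verified Lean document; each statement's English description precedes it below -/
import Mathlib

section
/- Let G be a multiplicatively written abelian group, let φ : G → [0,∞) be a height on G, and let t ∈ (0,∞). Then φ = φ_t if and only if φ is a t-metric height on G. In particular, (φ_t)_t = φ_t. -/
open scoped BigOperators

/-- A (logarithmic) height on a multiplicatively written abelian group `G`:
a nonnegative real-valued function with `φ 1 = 0` and `φ α⁻¹ = φ α`. -/
def IsHeight {G : Type*} [CommGroup G] (φ : G → ℝ) : Prop :=
  (∀ α : G, 0 ≤ φ α) ∧ φ 1 = 0 ∧ ∀ α : G, φ α⁻¹ = φ α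

/-- A `t`-metric height for real `t ∈ (0,∞)`: a height satisfying the `t`-triangle
inequality `φ (αβ) ≤ (φ α ^ t + φ β ^ t) ^ (1/t)`. -/
def IsTMetricHeight {G : Type*} [CommGroup G] (φ : G → ℝ) (t : ℝ) : Prop :=
  IsHeight φ ∧ ∀ α β : G, φ (α * β) ≤ (φ α ^ t + φ β ^ t) ^ (1 / t)

/-- An `∞`-metric height: a height satisfying the strong triangle inequality
`φ (αβ) ≤ max (φ α) (φ β)`. -/
def IsInftyMetricHeight {G : Type*} [CommGroup G] (φ : G → ℝ) : Prop :=
  IsHeight φ ∧ ∀ α β : G, φ (α * β) ≤ max (φ α) (φ β)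

/-- The `t`-metric version of a height `φ`:
`φ_t(α) = inf{(∑ₙ φ(αₙ)^t)^(1/t) : α = ∏ₙ αₙ}`, the infimum over all ways of writing `α`
as a finite product of elements of `G`. -/
noncomputable def metricVersion {G : Type*} [CommGroup G] (φ : G → ℝ) (t : ℝ) (α : G) : ℝ :=
  sInf {x : ℝ | ∃ (N : ℕ) (f : Fin (N + 1) → G),
    α = ∏ i, f i ∧ x = (∑ i, φ (f i) ^ t) ^ (1 / t)}

/-- The `∞`-metric version of a height `φ`:
`φ_∞(α) = inf{max₁≤n≤N φ(αₙ) : α = ∏ₙ αₙ}`. -/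
noncomputable def inftyMetricVersion {G : Type*} [CommGroup G] (φ : G → ℝ) (α : G) : ℝ :=
  sInf {x : ℝ | ∃ (N : ℕ) (f : Fin (N + 1) → G),
    α = ∏ i, f i ∧ x = Finset.univ.sup' Finset.univ_nonempty (fun i => φ (f i))}

/-!
Raising to the power `t` turns `φ_t(α)` into the infimum of the sums `∑ φ(αₙ)^t` over the
factorizations `α = ∏ αₙ`. Concatenating factorizations of `α` and `β` gives one of `αβ` whose
sum is the sum of the two, so `φ_t` satisfies the `t`-triangle inequality. Conversely, iterating
the `t`-triangle inequality of a `t`-metric height gives `φ(∏ αₙ)^t ≤ ∑ φ(αₙ)^t`, so `φ ≤ φ_t`,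
while `φ_t ≤ φ` always holds by the trivial factorization.
-/

open Pointwise

section

variable {G : Type*} [CommGroup G] {φ : G → ℝ} {t : ℝ}

def powerSums (φ : G → ℝ) (t : ℝ) (α : G) : Set ℝ :=
  {s | ∃ (N : ℕ) (f : Fin (N + 1) → G), α = ∏ i, f i ∧ s = ∑ i, φ (f i) ^ t}

lemma metricVersion_eq_sInf_image (φ : G → ℝ) (t : ℝ) (α : G) :
    metricVersion φ t α = sInf ((· ^ (1 / t)) '' powerSums φ t α) := by
  simp only [metricVersion]
  congr 1
  ext x
  constructor
  · rintro ⟨N, f, hf, rfl⟩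
    exact ⟨_, ⟨N, f, hf, rfl⟩, rfl⟩
  · rintro ⟨_, ⟨N, f, hf, rfl⟩, rfl⟩
    exact ⟨N, f, hf, rfl⟩

lemma rpow_mem_powerSums (φ : G → ℝ) (t : ℝ) (α : G) : φ α ^ t ∈ powerSums φ t α :=
  ⟨0, fun _ => α, by simp, by simp⟩

lemma powerSums_nonempty (φ : G → ℝ) (t : ℝ) (α : G) : (powerSums φ t α).Nonempty :=
  ⟨_, rpow_mem_powerSums φ t α⟩

lemma add_subset_powerSums_mul (α β : G) :
    powerSums φ t α + powerSums φ t β ⊆ powerSums φ t (α * β) := by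
  rintro _ ⟨_, ⟨N, f, rfl, rfl⟩, _, ⟨M, g, rfl, rfl⟩, rfl⟩
  refine ⟨N + 1 + M, (Fin.append f g : Fin ((N + 1) + (M + 1)) → G), ?_, ?_⟩
  · convert (Fin.prod_univ_add (Fin.append f g)).symm using 2 <;> simp
  · convert (Fin.sum_univ_add fun i => φ (Fin.append f g i) ^ t).symm using 2 <;> simp

namespace IsHeight

variable (hφ : IsHeight φ)
include hφ

lemma nonneg_of_mem_powerSums {α : G} {s : ℝ} (hs : s ∈ powerSums φ t α) : 0 ≤ s := by
  obtain ⟨N, f, -, rfl⟩ := hs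
  exact Finset.sum_nonneg fun i _ => Real.rpow_nonneg (hφ.1 _) _

lemma powerSums_bddBelow (α : G) : BddBelow (powerSums φ t α) :=
  ⟨0, fun _ => hφ.nonneg_of_mem_powerSums⟩

lemma sInf_powerSums_nonneg (α : G) : 0 ≤ sInf (powerSums φ t α) :=
  le_csInf (powerSums_nonempty φ t α) fun _ => hφ.nonneg_of_mem_powerSums

lemma powerSums_inv (α : G) : powerSums φ t α⁻¹ = powerSums φ t α := by
  have key : ∀ β : G, powerSums φ t β ⊆ powerSums φ t β⁻¹ := by
    rintro β _ ⟨N, f, rfl, rfl⟩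
    exact ⟨N, fun i => (f i)⁻¹, by rw [Finset.prod_inv_distrib], by simp only [hφ.2.2]⟩
  exact (key α).antisymm' (by simpa using key α⁻¹)

lemma sInf_powerSums_one (ht : 0 < t) : sInf (powerSums φ t 1) = 0 := by
  refine le_antisymm (csInf_le (hφ.powerSums_bddBelow 1) ?_) (hφ.sInf_powerSums_nonneg 1)
  simpa [hφ.2.1, Real.zero_rpow ht.ne'] using rpow_mem_powerSums φ t 1

lemma metricVersion_eq (ht : 0 < t) (α : G) :
    metricVersion φ t α = sInf (powerSums φ t α) ^ (1 / t) := by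
  rw [metricVersion_eq_sInf_image]
  refine (MonotoneOn.map_csInf_of_continuousWithinAt ?_ ?_ (powerSums_nonempty φ t α)
    (hφ.powerSums_bddBelow α)).symm
  · exact (Real.continuousAt_rpow_const _ _ (Or.inr (by positivity))).continuousWithinAt
  · exact fun x hx y _ hxy =>
      Real.rpow_le_rpow (hφ.nonneg_of_mem_powerSums hx) hxy (by positivity)

lemma metricVersion_rpow (ht : 0 < t) (α : G) :
    metricVersion φ t α ^ t = sInf (powerSums φ t α) := by
  rw [hφ.metricVersion_eq ht, one_div, Real.rpow_inv_rpow (hφ.sInf_powerSums_nonneg α) ht.ne']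

lemma isHeight_metricVersion (ht : 0 < t) : IsHeight (metricVersion φ t) := by
  refine ⟨fun α => ?_, ?_, fun α => ?_⟩
  · rw [hφ.metricVersion_eq ht]
    exact Real.rpow_nonneg (hφ.sInf_powerSums_nonneg α) _
  · rw [hφ.metricVersion_eq ht, hφ.sInf_powerSums_one ht, Real.zero_rpow (by positivity)]
  · rw [hφ.metricVersion_eq ht, hφ.metricVersion_eq ht, hφ.powerSums_inv]

lemma metricVersion_le (ht : 0 < t) (α : G) : metricVersion φ t α ≤ φ α := by
  rw [← Real.rpow_le_rpow_iff ((hφ.isHeight_metricVersion ht).1 α) (hφ.1 α) ht,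
    hφ.metricVersion_rpow ht]
  exact csInf_le (hφ.powerSums_bddBelow α) (rpow_mem_powerSums φ t α)

lemma metricVersion_mul_le (ht : 0 < t) (α β : G) :
    metricVersion φ t (α * β) ≤
      (metricVersion φ t α ^ t + metricVersion φ t β ^ t) ^ (1 / t) := by
  rw [hφ.metricVersion_eq ht, hφ.metricVersion_rpow ht, hφ.metricVersion_rpow ht,
    ← csInf_add (powerSums_nonempty φ t α) (hφ.powerSums_bddBelow α)
      (powerSums_nonempty φ t β) (hφ.powerSums_bddBelow β)]
  refine Real.rpow_le_rpow (hφ.sInf_powerSums_nonneg _) ?_ (by positivity)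
  exact csInf_le_csInf (hφ.powerSums_bddBelow _)
    ((powerSums_nonempty φ t α).add (powerSums_nonempty φ t β)) (add_subset_powerSums_mul α β)

lemma isTMetricHeight_metricVersion (ht : 0 < t) : IsTMetricHeight (metricVersion φ t) t :=
  ⟨hφ.isHeight_metricVersion ht, hφ.metricVersion_mul_le ht⟩

end IsHeight

namespace IsTMetricHeight

variable (hφ : IsTMetricHeight φ t) (ht : 0 < t)
include hφ ht

lemma rpow_mul_le (α β : G) : φ (α * β) ^ t ≤ φ α ^ t + φ β ^ t := by
  have hsum : 0 ≤ φ α ^ t + φ β ^ t :=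
    add_nonneg (Real.rpow_nonneg (hφ.1.1 α) t) (Real.rpow_nonneg (hφ.1.1 β) t)
  calc φ (α * β) ^ t ≤ ((φ α ^ t + φ β ^ t) ^ (1 / t)) ^ t :=
        Real.rpow_le_rpow (hφ.1.1 _) (hφ.2 α β) ht.le
    _ = φ α ^ t + φ β ^ t := by rw [one_div, Real.rpow_inv_rpow hsum ht.ne']

lemma rpow_prod_le {ι : Type*} (s : Finset ι) (f : ι → G) :
    φ (∏ i ∈ s, f i) ^ t ≤ ∑ i ∈ s, φ (f i) ^ t := by
  classical
  induction s using Finset.induction_on with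
  | empty => simp [hφ.1.2.1, Real.zero_rpow ht.ne']
  | insert a s ha ih =>
    rw [Finset.prod_insert ha, Finset.sum_insert ha]
    exact (hφ.rpow_mul_le ht _ _).trans (add_le_add le_rfl ih)

lemma metricVersion_eq : metricVersion φ t = φ := by
  funext α
  refine le_antisymm (hφ.1.metricVersion_le ht α) ?_
  rw [← Real.rpow_le_rpow_iff (hφ.1.1 α) (hφ.1.isHeight_metricVersion ht |>.1 α) ht,
    hφ.1.metricVersion_rpow ht]
  refine le_csInf (powerSums_nonempty φ t α) ?_
  rintro _ ⟨N, f, rfl, rfl⟩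
  exact hφ.rpow_prod_le ht _ f

end IsTMetricHeight

end

/-- If `φ` is a height on `G` and `t ∈ (0,∞)`, then `φ = φ_t` if and only if `φ` is a
`t`-metric height on `G`.  In particular, `(φ_t)_t = φ_t`. -/
theorem metricVersion_eq_iff_tMetric {G : Type*} [CommGroup G] (φ : G → ℝ)
    (hφ : IsHeight φ) (t : ℝ) (ht : 0 < t) :
    (φ = metricVersion φ t ↔ IsTMetricHeight φ t) ∧
      metricVersion (metricVersion φ t) t = metricVersion φ t := by
  have hmetric := hφ.isTMetricHeight_metricVersion ht
  exact ⟨⟨fun h => h ▸ hmetric, fun h => (h.metricVersion_eq ht).symm⟩,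
    hmetric.metricVersion_eq ht⟩
end

section
/- Let G be a countable multiplicatively written abelian group, let φ : G → [0,∞) be a height on G, fix α ∈ G, and let K ⊆ (0,∞) be an uncountable set such that for every t ∈ K the infimum in the definition of φ_t(α) is attained. Then K is uniform if and only if there exist N ∈ ℕ and α_1, …, α_N ∈ G such that α = ∏_{n=1}^N α_n and φ_t(α) = (∑_{n=1}^N φ(α_n)^t)^(1/t) for all t ∈ K. -/
open scoped BigOperators

/-- A set `S ⊆ G` containing the identity *replaces* `G` at `t` (for `φ` and `α`) if
`φ_t(α)` equals the infimum of `(∑ₙ φ(αₙ)^t)^(1/t)` over factorizations of `α` with all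
factors in `S`; we express this by saying that `φ_t(α)` is the greatest lower bound of
the set of values arising from such factorizations. -/
def Replaces {G : Type*} [CommGroup G] (φ : G → ℝ) (t : ℝ) (α : G) (S : Set G) : Prop :=
  IsGLB {x : ℝ | ∃ (N : ℕ) (f : Fin (N + 1) → G),
      (∀ i, f i ∈ S) ∧ α = ∏ i, f i ∧ x = (∑ i, φ (f i) ^ t) ^ (1 / t)}
    (metricVersion φ t α)

/-- The infimum in the definition of `φ_t(α)` is attained: some finite factorization
of `α` achieves the value `φ_t(α)`. -/
def InfAttained {G : Type*} [CommGroup G] (φ : G → ℝ) (t : ℝ) (α : G) : Prop :=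
  ∃ (N : ℕ) (f : Fin (N + 1) → G),
    α = ∏ i, f i ∧ metricVersion φ t α = (∑ i, φ (f i) ^ t) ^ (1 / t)

/-- The `L_t` norm `‖x‖_t = (∑ₙ |xₙ|^t)^(1/t)` of a finitely supported real sequence,
realized as a `Finsupp`. -/
noncomputable def ltNorm (x : ℕ →₀ ℝ) (t : ℝ) : ℝ :=
  (∑ n ∈ x.support, |x n| ^ t) ^ (1 / t)

/-- A subset `K ⊆ (0,∞)` is *uniform* (for `φ` and `α`) if there is a single finitely
supported real sequence `x` with `φ_t(α) = ‖x‖_t` for all `t ∈ K`. -/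
def IsUniform {G : Type*} [CommGroup G] (φ : G → ℝ) (α : G) (K : Set ℝ) : Prop :=
  ∃ x : ℕ →₀ ℝ, ∀ t ∈ K, metricVersion φ t α = ltNorm x t

/-- A point `t` of an interval `I` is *standard* relative to `I` (for `φ` and `α`) if
there is a uniform open interval `J ⊆ I` containing `t`; otherwise `t` is *exceptional*. -/
def IsStandardPt {G : Type*} [CommGroup G] (φ : G → ℝ) (α : G) (I : Set ℝ) (t : ℝ) : Prop :=
  ∃ J : Set ℝ, J ⊆ I ∧ IsOpen J ∧ J.OrdConnected ∧ t ∈ J ∧ IsUniform φ α J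

/-- `s` is an *intersection point* of a set `𝒳` of finitely supported real sequences if
there are `x, y ∈ 𝒳` with `‖x‖_s = ‖y‖_s` whose norm functions `t ↦ ‖x‖_t`, `t ↦ ‖y‖_t`
are not identical on `(0,∞)`. -/
def IsIntersectionPt (𝒳 : Set (ℕ →₀ ℝ)) (s : ℝ) : Prop :=
  ∃ x ∈ 𝒳, ∃ y ∈ 𝒳, ltNorm x s = ltNorm y s ∧ ∃ t : ℝ, 0 < t ∧ ltNorm x t ≠ ltNorm y t

/-!
As `G` is countable, `α` has only countably many finite factorizations, so one of them attains
`φ_t(α)` for uncountably many `t ∈ K`. On that set its norm function agrees with `t ↦ ‖x‖_t`.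
The `t`-th powers of both are finite sums of exponentials `t ↦ aᵗ`, analytic on `(0,∞)`, and an
uncountable set of reals accumulates at one of its own points, so by the identity theorem the two
norm functions agree on all of `(0,∞) ⊇ K`.
-/

open Set Filter Topology

theorem Real.analyticAt_const_rpow {a t : ℝ} (h : a ≠ 0 ∨ t ≠ 0) :
    AnalyticAt ℝ (fun s : ℝ => a ^ s) t := by
  rcases lt_trichotomy a 0 with ha | rfl | ha
  · simp_rw [Real.rpow_def_of_neg ha]
    fun_prop
  · have hne : ∀ᶠ s in 𝓝 t, s ≠ 0 := isOpen_ne.mem_nhds (h.resolve_left (by simp))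
    exact analyticAt_const.congr (hne.mono fun s hs => (Real.zero_rpow hs).symm)
  · simp_rw [Real.rpow_def_of_pos ha]
    fun_prop

theorem exists_mem_accPt_of_not_countable {X : Type*} [TopologicalSpace X]
    [HereditarilyLindelofSpace X] {S : Set X} (hS : ¬ S.Countable) :
    ∃ x ∈ S, AccPt x (𝓟 S) := by
  by_contra! h
  exact hS ((HereditarilyLindelofSpace.isLindelof S).countable (discreteTopology_of_noAccPts h))

theorem AnalyticOnNhd.eqOn_of_preconnected_of_not_countable {𝕜 E : Type*}
    [NontriviallyNormedField 𝕜] [HereditarilyLindelofSpace 𝕜] [NormedAddCommGroup E]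
    [NormedSpace 𝕜 E] {f g : 𝕜 → E} {U S : Set 𝕜} (hf : AnalyticOnNhd 𝕜 f U)
    (hg : AnalyticOnNhd 𝕜 g U) (hU : IsPreconnected U) (hSU : S ⊆ U) (hS : ¬ S.Countable)
    (hfg : EqOn f g S) : EqOn f g U := by
  obtain ⟨z, hzS, hz⟩ := exists_mem_accPt_of_not_countable hS
  refine hf.eqOn_of_preconnected_of_frequently_eq hg hU (hSU hzS) ?_
  exact (accPt_iff_frequently_nhdsNE.1 hz).mono fun s hs => hfg hs

theorem Set.exists_not_countable_sep_of_forall_exists {α ι : Type*} [Countable ι]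
    {S : Set α} {P : ι → α → Prop} (hS : ¬ S.Countable) (h : ∀ a ∈ S, ∃ i, P i a) :
    ∃ i, ¬ {a ∈ S | P i a}.Countable := by
  by_contra! hc
  refine hS ((countable_iUnion hc).mono fun a ha => ?_)
  obtain ⟨i, hi⟩ := h a ha
  exact mem_iUnion.2 ⟨i, ha, hi⟩

theorem analyticOnNhd_sum_abs_rpow (x : ℕ →₀ ℝ) :
    AnalyticOnNhd ℝ (fun t : ℝ => ∑ n ∈ x.support, |x n| ^ t) (Ioi 0) :=
  Finset.analyticOnNhd_fun_sum _ fun _ _ _ ht => Real.analyticAt_const_rpow (.inr (ne_of_gt ht))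

theorem ltNorm_rpow (x : ℕ →₀ ℝ) {t : ℝ} (ht : t ≠ 0) :
    ltNorm x t ^ t = ∑ n ∈ x.support, |x n| ^ t := by
  rw [ltNorm, one_div, Real.rpow_inv_rpow (Finset.sum_nonneg fun _ _ => by positivity) ht]

theorem ltNorm_eqOn_Ioi_of_not_countable {x y : ℕ →₀ ℝ} {S : Set ℝ} (hS : S ⊆ Ioi 0)
    (hSc : ¬ S.Countable) (h : EqOn (ltNorm x) (ltNorm y) S) :
    EqOn (ltNorm x) (ltNorm y) (Ioi 0) := by
  have hsum := (analyticOnNhd_sum_abs_rpow x).eqOn_of_preconnected_of_not_countable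
    (analyticOnNhd_sum_abs_rpow y) isPreconnected_Ioi hS hSc fun t ht => by
      dsimp only
      rw [← ltNorm_rpow x (hS ht).ne', ← ltNorm_rpow y (hS ht).ne', h ht]
  intro t ht
  simp only [ltNorm, hsum ht]

noncomputable def Finsupp.ofFin {n : ℕ} (v : Fin n → ℝ) : ℕ →₀ ℝ :=
  Finsupp.embDomain Fin.valEmbedding (Finsupp.equivFunOnFinite.symm v)

theorem ltNorm_ofFin {n : ℕ} (v : Fin n → ℝ) {t : ℝ} (ht : t ≠ 0) :
    ltNorm (Finsupp.ofFin v) t = (∑ i, |v i| ^ t) ^ (1 / t) := by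
  change ((Finsupp.ofFin v).sum fun _ a => |a| ^ t) ^ (1 / t) = _
  rw [Finsupp.ofFin, Finsupp.sum_embDomain,
    Finsupp.sum_fintype _ _ (by simp [Real.zero_rpow ht])]
  simp

theorem ltNorm_ofFin_of_nonneg {n : ℕ} {v : Fin n → ℝ} (hv : ∀ i, 0 ≤ v i) {t : ℝ} (ht : t ≠ 0) :
    ltNorm (Finsupp.ofFin v) t = (∑ i, v i ^ t) ^ (1 / t) := by
  simp only [ltNorm_ofFin v ht, abs_of_nonneg (hv _)]

/-- Let `G` be a countable abelian group, `φ` a height on `G`, `α ∈ G`, and `K ⊆ (0,∞)`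
an uncountable set such that the infimum in the definition of `φ_t(α)` is attained for
every `t ∈ K`.  Then `K` is uniform if and only if there is a single factorization
`α = ∏ₙ αₙ` with `φ_t(α) = (∑ₙ φ(αₙ)^t)^(1/t)` for all `t ∈ K`. -/
theorem uniform_iff_single_factorization {G : Type*} [CommGroup G] [Countable G]
    (φ : G → ℝ) (hφ : IsHeight φ) (α : G) (K : Set ℝ) (hK : K ⊆ Set.Ioi 0)
    (hKunc : ¬ K.Countable) (hatt : ∀ t ∈ K, InfAttained φ t α) :
    IsUniform φ α K ↔
      ∃ (N : ℕ) (f : Fin (N + 1) → G), α = ∏ i, f i ∧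
        ∀ t ∈ K, metricVersion φ t α = (∑ i, φ (f i) ^ t) ^ (1 / t) := by
  have hnorm {N : ℕ} (f : Fin N → G) {t : ℝ} (ht : t ∈ K) :
      ltNorm (Finsupp.ofFin (φ ∘ f)) t = (∑ i, φ (f i) ^ t) ^ (1 / t) :=
    ltNorm_ofFin_of_nonneg (fun i => hφ.1 (f i)) (hK ht).ne'
  constructor
  · rintro ⟨x, hx⟩
    obtain ⟨⟨N, f⟩, hA⟩ := K.exists_not_countable_sep_of_forall_exists
      (P := fun (p : Σ N : ℕ, Fin (N + 1) → G) t =>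
        α = ∏ i, p.2 i ∧ metricVersion φ t α = (∑ i, φ (p.2 i) ^ t) ^ (1 / t)) hKunc fun t ht =>
        let ⟨N, f, hf⟩ := hatt t ht; ⟨⟨N, f⟩, hf⟩
    obtain ⟨-, -, hprod, -⟩ := Set.Infinite.nonempty (mt Set.Finite.countable hA)
    have hxf := ltNorm_eqOn_Ioi_of_not_countable (y := Finsupp.ofFin (φ ∘ f))
      (fun t ht => hK ht.1) hA fun t ⟨htK, _, hopt⟩ => by rw [← hx t htK, hopt, hnorm f htK]
    exact ⟨N, f, hprod, fun t ht => by rw [hx t ht, hxf (hK ht), hnorm f ht]⟩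
  · rintro ⟨N, f, -, hf⟩
    exact ⟨Finsupp.ofFin (φ ∘ f), fun t ht => by rw [hf t ht, hnorm f ht]⟩
end

section
/- Let G be a countable multiplicatively written abelian group, let φ : G → [0,∞) be a height on G, fix α ∈ G, and let I ⊆ (0,∞) be an open interval such that the infimum in the definition of φ_t(α) is attained for every t ∈ I. Then the following are equivalent: (i) there exists a finite set 𝒳 of finitely supported real sequences such that φ_t(α) = min{‖x‖_t : x ∈ 𝒳} for all t ∈ I; (ii) I contains only finitely many exceptional points; (iii) there exists a finite set R ⊆ G containing the identity that replaces G at every t ∈ I; (iv) there exists a set S ⊆ G containing the identity, with φ(S) finite, that replaces G at every t ∈ I. -/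
/-!
For finitely supported `x`, `‖x‖_t ^ t = ∑ₙ exp (t log |xₙ|)` is an exponential sum; by Rolle's
theorem and induction on the number of terms, two functions `t ↦ ‖x‖_t` agreeing at infinitely
many `t > 0` agree on all of `(0, ∞)`.

(i) ⇒ (ii): away from the finitely many intersection points of `𝒳`, continuity shows that the
minimum over `𝒳` is locally a single `‖x‖_t`. (ii) ⇒ (iii): on each of the finitely many open
intervals cut out by the exceptional points, local uniformity propagates by connectedness to a
single `x`; as `G` is countable and the infimum is attained at uncountably many `t`, a single
factorization attains `φ_t(α)` at infinitely many, hence at all, `t` of the interval. Its factors,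
together with attaining factorizations at the exceptional points, form `R`. (iv) ⇒ (i): by
Dickson's lemma, the vectors counting how often a factorization into `S` takes each value of
`φ(S)` have finitely many minimal elements, and for every `t` the optimum is attained at one of
them.
-/

open scoped BigOperators

open Real Set Filter Topology

noncomputable def expSum {ι : Type*} (s : Finset ι) (c r : ι → ℝ) (t : ℝ) : ℝ :=
  ∑ i ∈ s, c i * exp (r i * t)

section ExpSum

variable {ι : Type*} (s : Finset ι) (c r : ι → ℝ)

theorem hasDerivAt_expSum (t : ℝ) :
    HasDerivAt (expSum s c r) (expSum s (fun i => c i * r i) r t) t := by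
  refine HasDerivAt.fun_sum fun i _ => ?_
  simpa [mul_comm, mul_left_comm, mul_assoc] using
    ((hasDerivAt_id t).const_mul (r i)).exp.const_mul (c i)

theorem hasDerivAt_exp_mul_expSum (r₀ t : ℝ) :
    HasDerivAt (fun t => exp (-(r₀ * t)) * expSum s c r t)
      (exp (-(r₀ * t)) * expSum s (fun i => c i * (r i - r₀)) r t) t := by
  have hexp : HasDerivAt (fun t => exp (-(r₀ * t))) (exp (-(r₀ * t)) * -r₀) t := by
    simpa using ((hasDerivAt_id t).const_mul r₀).neg.exp
  refine (hexp.mul (hasDerivAt_expSum s c r t)).congr_deriv ?_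
  simp only [expSum, Finset.mul_sum, ← Finset.sum_add_distrib]
  exact Finset.sum_congr rfl fun i _ => by ring

end ExpSum

/-- Rolle's theorem between consecutive zeros. -/
theorem infinite_setOf_deriv_eq_zero {f f' : ℝ → ℝ} (hf : ∀ x, HasDerivAt f (f' x) x)
    (h : {x | f x = 0}.Infinite) : {x | f' x = 0}.Infinite := by
  intro hfin
  obtain ⟨s, hs, hcard⟩ := h.exists_subset_card_eq (hfin.toFinset.card + 2)
  have := Finset.card_le_of_interleaved (s := s) (t := hfin.toFinset) fun x hx y hy hxy _ => by
    obtain ⟨z, hz, hz0⟩ := exists_hasDerivAt_eq_zero hxy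
      (fun u _ => (hf u).continuousAt.continuousWithinAt)
      ((hs hx).trans (hs hy).symm) (fun u _ => hf u)
    exact ⟨z, hfin.mem_toFinset.2 hz0, hz⟩
  omega

theorem expSum_eq_zero_of_infinite {ι : Type*} (s : Finset ι) (r : ι → ℝ) :
    ∀ c : ι → ℝ, {t | expSum s c r t = 0}.Infinite → ∀ t, expSum s c r t = 0 := by
  classical
  induction s using Finset.induction_on with
  | empty => intro c _ t; simp [expSum]
  | insert i₀ s hi₀ ih =>
    intro c hc
    -- Multiplying by `exp (-(r i₀ * t))` makes the `i₀` term constant, so differentiating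
    -- kills it and leaves an exponential sum over `s`.
    set g := fun t => exp (-(r i₀ * t)) * expSum (insert i₀ s) c r t
    have hdrop : ∀ t, expSum (insert i₀ s) (fun i => c i * (r i - r i₀)) r t =
        expSum s (fun i => c i * (r i - r i₀)) r t := fun t => by
      simp [expSum, Finset.sum_insert hi₀]
    have hg : ∀ t, HasDerivAt g
        (exp (-(r i₀ * t)) * expSum s (fun i => c i * (r i - r i₀)) r t) t :=
      fun t => hdrop t ▸ hasDerivAt_exp_mul_expSum _ c r (r i₀) t
    have hg_zero : ∀ t, g t = 0 ↔ expSum (insert i₀ s) c r t = 0 := fun t => by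
      simp [g, exp_ne_zero]
    have hderiv : ∀ t, expSum s (fun i => c i * (r i - r i₀)) r t = 0 :=
      ih _ (by simpa [exp_ne_zero] using
        infinite_setOf_deriv_eq_zero hg (by simpa only [hg_zero] using hc))
    have hconst := is_const_of_deriv_eq_zero (fun t => (hg t).differentiableAt)
      fun t => by rw [(hg t).deriv, hderiv, mul_zero]
    obtain ⟨t₀, ht₀⟩ := hc.nonempty
    intro t
    rw [← hg_zero, hconst t t₀, hg_zero]
    exact ht₀

theorem ltNorm_eq_ltNorm_iff {x y : ℕ →₀ ℝ} {t : ℝ} (ht : t ≠ 0) :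
    ltNorm x t = ltNorm y t ↔ ∑ n ∈ x.support, |x n| ^ t = ∑ n ∈ y.support, |y n| ^ t :=
  (Real.rpow_left_injOn (one_div_ne_zero ht)).eq_iff
    (show (0 : ℝ) ≤ _ from Finset.sum_nonneg fun _ _ => by positivity)
    (show (0 : ℝ) ≤ _ from Finset.sum_nonneg fun _ _ => by positivity)

theorem sum_abs_rpow_eq_exp_sum (x : ℕ →₀ ℝ) (t : ℝ) :
    ∑ n ∈ x.support, |x n| ^ t = ∑ n ∈ x.support, exp (log |x n| * t) :=
  Finset.sum_congr rfl fun _ hn => rpow_def_of_pos (abs_pos.2 (Finsupp.mem_support_iff.1 hn)) t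

theorem ltNorm_eqOn_of_infinite {x y : ℕ →₀ ℝ}
    (h : {t | 0 < t ∧ ltNorm x t = ltNorm y t}.Infinite) : EqOn (ltNorm x) (ltNorm y) (Ioi 0) := by
  let c : ℕ ⊕ ℕ → ℝ := Sum.elim 1 (-1)
  let r : ℕ ⊕ ℕ → ℝ := Sum.elim (fun n => log |x n|) (fun n => log |y n|)
  have hdiff : ∀ t, expSum (x.support.disjSum y.support) c r t =
      ∑ n ∈ x.support, |x n| ^ t - ∑ n ∈ y.support, |y n| ^ t := fun t => by
    simp [expSum, Finset.sum_disjSum, c, r, sum_abs_rpow_eq_exp_sum, sub_eq_add_neg]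
  have hzero := expSum_eq_zero_of_infinite (x.support.disjSum y.support) r c <|
    h.mono fun t ht => by
    change expSum _ c r t = 0
    rw [hdiff, (ltNorm_eq_ltNorm_iff ht.1.ne').1 ht.2, sub_self]
  intro t ht
  rw [ltNorm_eq_ltNorm_iff (ne_of_gt ht), ← sub_eq_zero, ← hdiff]
  exact hzero t

theorem ltNorm_eqOn_of_eventuallyEq {x y : ℕ →₀ ℝ} {t : ℝ} (ht : 0 < t)
    (h : ltNorm x =ᶠ[𝓝 t] ltNorm y) : EqOn (ltNorm x) (ltNorm y) (Ioi 0) :=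
  ltNorm_eqOn_of_infinite <| infinite_of_mem_nhds t <| (eventually_gt_nhds ht).and h

theorem continuousAt_ltNorm (x : ℕ →₀ ℝ) {t : ℝ} (ht : 0 < t) : ContinuousAt (ltNorm x) t := by
  refine ContinuousAt.rpow ?_ (continuousAt_const.div continuousAt_id ht.ne')
    (Or.inr (one_div_pos.2 ht))
  exact tendsto_finsetSum _ fun n hn =>
    Real.continuousAt_const_rpow (abs_ne_zero.2 (Finsupp.mem_support_iff.1 hn))

theorem finite_setOf_isIntersectionPt {𝒳 : Set (ℕ →₀ ℝ)} (h𝒳 : 𝒳.Finite) :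
    {s | 0 < s ∧ IsIntersectionPt 𝒳 s}.Finite := by
  have hpair : ∀ x y : ℕ →₀ ℝ,
      {s | 0 < s ∧ ltNorm x s = ltNorm y s ∧ ¬ EqOn (ltNorm x) (ltNorm y) (Ioi 0)}.Finite := by
    intro x y
    refine Set.not_infinite.1 fun hinf => ?_
    obtain ⟨-, -, -, hne⟩ := hinf.nonempty
    exact hne (ltNorm_eqOn_of_infinite (hinf.mono fun s hs => ⟨hs.1, hs.2.1⟩))
  refine (h𝒳.biUnion fun x _ => h𝒳.biUnion fun y _ => hpair x y).subset ?_
  rintro s ⟨hs, x, hx, y, hy, hxy, t, ht, hne⟩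
  exact mem_biUnion hx (mem_biUnion hy ⟨hs, hxy, fun h => hne (h ht)⟩)

/-- The finitely supported sequence `v 0, v 1, …, v (N - 1), 0, 0, …`. -/
noncomputable def finToSeq {N : ℕ} (v : Fin N → ℝ) : ℕ →₀ ℝ :=
  Finsupp.embDomain Fin.valEmbedding (Finsupp.equivFunOnFinite.symm v)

theorem ltNorm_finToSeq {N : ℕ} {v : Fin N → ℝ} (hv : ∀ i, 0 ≤ v i) {t : ℝ} (ht : t ≠ 0) :
    ltNorm (finToSeq v) t = (∑ i, v i ^ t) ^ (1 / t) := by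
  change (Finsupp.sum _ fun _ a => |a| ^ t) ^ (1 / t) = _
  rw [finToSeq, Finsupp.sum_embDomain, Finsupp.sum_fintype _ _ fun _ => by simp [zero_rpow ht]]
  simp [abs_of_nonneg (hv _)]

theorem exists_eqOn_ltNorm_of_isPreconnected {g : ℝ → ℝ} {C : Set ℝ} (hC : IsPreconnected C)
    (hC0 : C ⊆ Ioi 0) (hg : ∀ t ∈ C, ∃ x, g =ᶠ[𝓝 t] ltNorm x) : ∃ x, EqOn g (ltNorm x) C := by
  rcases C.eq_empty_or_nonempty with rfl | ⟨t₀, ht₀⟩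
  · exact ⟨0, eqOn_empty _ _⟩
  obtain ⟨x₀, hx₀⟩ := hg t₀ ht₀
  suffices hsub : C ⊆ {t | g =ᶠ[𝓝 t] ltNorm x₀} from ⟨x₀, fun t ht => (hsub ht).self_of_nhds⟩
  refine hC.subset_of_closure_inter_subset isOpen_setOfPred_eventually_nhds ⟨t₀, ht₀, hx₀⟩ ?_
  rintro t ⟨htcl, htC⟩
  obtain ⟨x, hx⟩ := hg t htC
  obtain ⟨s, ⟨hs0, hsx⟩, hsx₀⟩ := mem_closure_iff_nhds.1 htcl _
    ((eventually_gt_nhds (hC0 htC)).and hx.eventuallyEq_nhds)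
  have hxx₀ := ltNorm_eqOn_of_eventuallyEq hs0 (hsx.symm.trans hsx₀)
  exact hx.trans (hxx₀.eventuallyEq_of_mem (Ioi_mem_nhds (hC0 htC)))

theorem not_countable_of_isOpen {C : Set ℝ} (hC : IsOpen C) (hne : C.Nonempty) : ¬ C.Countable :=
  fun hcount => by
    obtain ⟨_, hx, hxc⟩ := (hcount.dense_compl ℝ).inter_open_nonempty C hC hne
    exact hxc hx

theorem exists_infinite_fiber_of_not_countable {α β : Type*} [Countable β] {C : Set α}
    (hC : ¬ C.Countable) (p : α → β) : ∃ b, (C ∩ p ⁻¹' {b}).Infinite := by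
  by_contra! hfin
  refine hC <| (countable_iUnion fun b => (hfin b).countable).mono fun t ht => ?_
  exact mem_iUnion.2 ⟨p t, ht, rfl⟩

section Factorization

variable {G : Type*} [CommGroup G] {φ : G → ℝ} {α : G}

theorem metricVersion_le (hφ : ∀ g, 0 ≤ φ g) {t : ℝ} {N : ℕ} {f : Fin (N + 1) → G}
    (hf : α = ∏ i, f i) : metricVersion φ t α ≤ (∑ i, φ (f i) ^ t) ^ (1 / t) := by
  refine csInf_le ⟨0, ?_⟩ ⟨N, f, hf, rfl⟩
  rintro _ ⟨_, f', -, rfl⟩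
  exact rpow_nonneg (Finset.sum_nonneg fun i _ => rpow_nonneg (hφ _) t) _

theorem replaces_of_eq (hφ : ∀ g, 0 ≤ φ g) {t : ℝ} {S : Set G} {N : ℕ} {f : Fin (N + 1) → G}
    (hfS : ∀ i, f i ∈ S) (hf : α = ∏ i, f i)
    (h : metricVersion φ t α = (∑ i, φ (f i) ^ t) ^ (1 / t)) : Replaces φ t α S :=
  IsLeast.isGLB ⟨⟨N, f, hfS, hf, h⟩, by
    rintro _ ⟨N', f', -, hf', rfl⟩
    exact metricVersion_le hφ hf'⟩

theorem IsStandardPt.exists_eventuallyEq {I : Set ℝ} {t : ℝ} (h : IsStandardPt φ α I t) :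
    ∃ x, (metricVersion φ · α) =ᶠ[𝓝 t] ltNorm x := by
  obtain ⟨J, -, hJ, -, htJ, x, hx⟩ := h
  exact ⟨x, eventually_of_mem (hJ.mem_nhds htJ) hx⟩

theorem isStandardPt_of_eventuallyEq {I : Set ℝ} (hI : IsOpen I) {t : ℝ} (ht : t ∈ I)
    {x : ℕ →₀ ℝ} (h : (metricVersion φ · α) =ᶠ[𝓝 t] ltNorm x) : IsStandardPt φ α I t := by
  obtain ⟨ε, hε, hball⟩ := Metric.mem_nhds_iff.1 (inter_mem (hI.mem_nhds ht) h)
  rw [Real.ball_eq_Ioo] at hball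
  exact ⟨Ioo (t - ε) (t + ε), fun s hs => (hball hs).1, isOpen_Ioo, ordConnected_Ioo,
    ⟨by linarith, by linarith⟩, x, fun s hs => (hball hs).2⟩

theorem exists_factorization_eqOn [Countable G] (hφ : ∀ g, 0 ≤ φ g) {C : Set ℝ} (hC : IsOpen C)
    (hC0 : C ⊆ Ioi 0) {x : ℕ →₀ ℝ} (hx : EqOn (metricVersion φ · α) (ltNorm x) C)
    (hatt : ∀ t ∈ C, InfAttained φ t α) :
    ∃ (N : ℕ) (f : Fin (N + 1) → G), α = ∏ i, f i ∧
      ∀ t ∈ C, metricVersion φ t α = (∑ i, φ (f i) ^ t) ^ (1 / t) := by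
  rcases C.eq_empty_or_nonempty with rfl | hne
  · exact ⟨0, ![α], by simp, fun _ h => h.elim⟩
  -- There are only countably many factorizations but uncountably many `t ∈ C`.
  have hatt' : ∀ t ∈ C, ∃ q : Σ N : ℕ, Fin (N + 1) → G, α = ∏ i, q.2 i ∧
      metricVersion φ t α = (∑ i, φ (q.2 i) ^ t) ^ (1 / t) :=
    fun t ht => let ⟨N, f, h⟩ := hatt t ht; ⟨⟨N, f⟩, h⟩
  choose! q hq using hatt'
  obtain ⟨⟨N, f⟩, hfib⟩ := exists_infinite_fiber_of_not_countable (not_countable_of_isOpen hC hne) q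
  have hqf : ∀ t ∈ C ∩ q ⁻¹' {⟨N, f⟩},
      α = ∏ i, f i ∧ metricVersion φ t α = (∑ i, φ (f i) ^ t) ^ (1 / t) := by
    rintro t ⟨htC, hqt : q t = ⟨N, f⟩⟩
    have h := hq t htC
    generalize q t = r at h hqt
    subst hqt
    exact h
  have hv : ∀ i, 0 ≤ (φ ∘ f) i := fun i => hφ _
  have hxf : EqOn (ltNorm x) (ltNorm (finToSeq (φ ∘ f))) (Ioi 0) := by
    refine ltNorm_eqOn_of_infinite (hfib.mono fun t ht => ⟨hC0 ht.1, ?_⟩)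
    rw [ltNorm_finToSeq hv (hC0 ht.1).ne']
    exact (hx ht.1).symm.trans (hqf t ht).2
  obtain ⟨t₀, ht₀⟩ := hfib.nonempty
  refine ⟨N, f, (hqf t₀ ht₀).1, fun t ht => (hx ht).trans ?_⟩
  rw [hxf (hC0 ht), ltNorm_finToSeq hv (hC0 ht).ne']
  rfl

end Factorization

/-- The open cell of `ℝ \ F` lying above exactly the points of `P ⊆ F`. -/
def finsetCell (F P : Finset ℝ) : Set ℝ := ⋂ e ∈ F, if e ∈ P then Ioi e else Iio e

section FinsetCell

variable {F P : Finset ℝ}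

theorem isOpen_finsetCell : IsOpen (finsetCell F P) :=
  isOpen_biInter_finset fun e _ => by split_ifs <;> first | exact isOpen_Ioi | exact isOpen_Iio

theorem ordConnected_finsetCell : (finsetCell F P).OrdConnected :=
  ordConnected_biInter fun e _ => by split_ifs <;> infer_instance

theorem mem_finsetCell_filter_lt {t : ℝ} (ht : t ∉ F) : t ∈ finsetCell F (F.filter (· < t)) := by
  simp only [finsetCell, mem_iInter, Finset.mem_filter]
  intro e he
  split_ifs with h
  · exact h.2
  · exact lt_of_le_of_ne (not_lt.1 fun h' => h ⟨he, h'⟩) fun h' => ht (h' ▸ he)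

theorem notMem_finsetCell {e : ℝ} (he : e ∈ F) : e ∉ finsetCell F P := by
  simp only [finsetCell, mem_iInter, not_forall]
  exact ⟨e, he, by split_ifs <;> simp⟩

end FinsetCell

theorem exists_eventuallyEq_of_isLeast {X ι : Type*} [TopologicalSpace X] {𝒳 : Set ι}
    (h𝒳 : 𝒳.Finite) {F : ι → X → ℝ} {g : X → ℝ} {t : X} (hF : ∀ x ∈ 𝒳, ContinuousAt (F x) t)
    (hg : ∀ᶠ s in 𝓝 t, IsLeast ((F · s) '' 𝒳) (g s))
    (htie : ∀ x ∈ 𝒳, ∀ y ∈ 𝒳, F x t = F y t → F x =ᶠ[𝓝 t] F y) :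
    ∃ x ∈ 𝒳, g =ᶠ[𝓝 t] F x := by
  obtain ⟨⟨x₀, hx₀, hx₀t : F x₀ t = g t⟩, hlow⟩ := hg.self_of_nhds
  refine ⟨x₀, hx₀, ?_⟩
  have hsep : ∀ y ∈ 𝒳, ∀ᶠ s in 𝓝 t, F y s = F x₀ s ∨ F x₀ s < F y s := by
    intro y hy
    rcases (hlow ⟨y, hy, rfl⟩).eq_or_lt with h | h
    · exact (htie y hy x₀ hx₀ (h.symm.trans hx₀t.symm)).mono fun s hs => Or.inl hs
    · exact ((hF x₀ hx₀).eventually_lt (hF y hy) (by rwa [hx₀t])).mono fun s hs => Or.inr hs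
  filter_upwards [hg, (h𝒳.eventually_all).2 hsep] with s hs hsep
  obtain ⟨⟨y, hy, hys : F y s = g s⟩, hlows⟩ := hs
  rcases hsep y hy with h | h
  · rw [← hys, h]
  · exact absurd (hlows ⟨x₀, hx₀, rfl⟩) (not_le.2 (hys ▸ h))

theorem Set.IsPWO.finite_setOf_minimal {α : Type*} [PartialOrder α] {A : Set α} (hA : A.IsPWO) :
    {m | Minimal (· ∈ A) m}.Finite :=
  (setOfPred_minimal_antichain _).finite_of_partiallyWellOrderedOn (hA.mono fun _ hm => hm.prop)

theorem IsGLB.isLeast_image_minimal {α β : Type*} [PartialOrder α] [LinearOrder β] [NoMaxOrder β]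
    {A : Set α} (hA : A.IsPWO) {w : α → β} (hw : MonotoneOn w A) {c : β} (h : IsGLB (w '' A) c) :
    IsLeast (w '' {m | Minimal (· ∈ A) m}) c := by
  obtain ⟨a, ha⟩ : A.Nonempty := by
    by_contra hA'
    rw [not_nonempty_iff_eq_empty.1 hA', image_empty, isGLB_empty_iff] at h
    exact not_isTop c h
  obtain ⟨m, hmM, hm⟩ := exists_min_image _ w hA.finite_setOf_minimal (hA.exists_minimal ⟨a, ha⟩)
  have hlow : w m ∈ lowerBounds (w '' A) := by
    rintro _ ⟨a, ha, rfl⟩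
    obtain ⟨b, hba, hb⟩ := hA.exists_le_minimal ha
    exact (hm b hb).trans (hw hb.prop ha hba)
  have hmc : w m = c := (h.unique (IsLeast.isGLB ⟨⟨m, hmM.prop, rfl⟩, hlow⟩)).symm
  exact ⟨⟨m, hmM, hmc⟩, fun _ hx => h.1 (image_mono (fun _ hm => hm.prop) hx)⟩

noncomputable def valueCount {n : ℕ} (V : Finset ℝ) (v : Fin n → ℝ) (w : V) : ℕ :=
  (Finset.univ.filter fun i => v i = w).card

theorem sum_comp_eq_sum_valueCount {n : ℕ} {V : Finset ℝ} {v : Fin n → ℝ} (hv : ∀ i, v i ∈ V)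
    (g : ℝ → ℝ) : ∑ i, g (v i) = ∑ w : V, (valueCount V v w : ℝ) * g w := by
  classical
  rw [← Finset.sum_fiberwise_of_maps_to (t := V) (fun i _ => hv i), ← Finset.sum_coe_sort V]
  refine Finset.sum_congr rfl fun w _ => ?_
  rw [Finset.sum_congr rfl fun i hi => by rw [(Finset.mem_filter.1 hi).2], Finset.sum_const,
    nsmul_eq_mul]
  rfl

theorem monotone_sum_mul_rpow {V : Finset ℝ} (hV : ∀ w ∈ V, 0 ≤ w) {t : ℝ} (ht : 0 < t) :
    Monotone fun m : V → ℕ => (∑ w : V, (m w : ℝ) * (w : ℝ) ^ t) ^ (1 / t) := fun m m' h =>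
  rpow_le_rpow
    (Finset.sum_nonneg fun w _ => mul_nonneg (Nat.cast_nonneg _) (rpow_nonneg (hV w w.2) t))
    (Finset.sum_le_sum fun w _ => mul_le_mul_of_nonneg_right (Nat.cast_le.2 (h w))
      (rpow_nonneg (hV w w.2) t)) (by positivity)

section Implications

variable {G : Type*} [CommGroup G] {φ : G → ℝ} {α : G} {I : Set ℝ}

/-- Exceptional points are intersection points of `𝒳`. -/
theorem finite_exceptional_of_isLeast (hI : IsOpen I) (hI0 : I ⊆ Ioi 0) {𝒳 : Set (ℕ →₀ ℝ)}
    (h𝒳 : 𝒳.Finite)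
    (hmin : ∀ t ∈ I, IsLeast ((fun x => ltNorm x t) '' 𝒳) (metricVersion φ t α)) :
    {t | t ∈ I ∧ ¬ IsStandardPt φ α I t}.Finite := by
  refine (finite_setOf_isIntersectionPt h𝒳).subset ?_
  rintro t ⟨htI, hexc⟩
  refine ⟨hI0 htI, by_contra fun hnot => hexc ?_⟩
  have htie : ∀ x ∈ 𝒳, ∀ y ∈ 𝒳, ltNorm x t = ltNorm y t → ltNorm x =ᶠ[𝓝 t] ltNorm y := by
    intro x hx y hy hxy
    have : EqOn (ltNorm x) (ltNorm y) (Ioi 0) := fun s hs =>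
      by_contra fun hne => hnot ⟨x, hx, y, hy, hxy, s, hs, hne⟩
    exact this.eventuallyEq_of_mem (Ioi_mem_nhds (hI0 htI))
  obtain ⟨x, -, hx⟩ := exists_eventuallyEq_of_isLeast h𝒳
    (fun x _ => continuousAt_ltNorm x (hI0 htI)) (eventually_of_mem (hI.mem_nhds htI) hmin) htie
  exact isStandardPt_of_eventuallyEq hI htI hx

theorem exists_finite_replaces_of_finite_exceptional [Countable G] (hφ : ∀ g, 0 ≤ φ g)
    (hI : IsOpen I) (hIc : I.OrdConnected) (hI0 : I ⊆ Ioi 0)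
    (hatt : ∀ t ∈ I, InfAttained φ t α) (hexc : {t | t ∈ I ∧ ¬ IsStandardPt φ α I t}.Finite) :
    ∃ R : Set G, R.Finite ∧ 1 ∈ R ∧ ∀ t ∈ I, Replaces φ t α R := by
  classical
  set F := hexc.toFinset
  have hcell : ∀ P : Finset ℝ, ∃ (N : ℕ) (f : Fin (N + 1) → G), α = ∏ i, f i ∧
      ∀ t ∈ I ∩ finsetCell F P, metricVersion φ t α = (∑ i, φ (f i) ^ t) ^ (1 / t) := by
    intro P
    have hstd : ∀ t ∈ I ∩ finsetCell F P, IsStandardPt φ α I t := fun t ht =>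
      by_contra fun h => notMem_finsetCell (hexc.mem_toFinset.2 ⟨ht.1, h⟩) ht.2
    obtain ⟨x, hx⟩ := exists_eqOn_ltNorm_of_isPreconnected
      (hIc.inter ordConnected_finsetCell).isPreconnected (inter_subset_left.trans hI0)
      fun t ht => (hstd t ht).exists_eventuallyEq
    exact exists_factorization_eqOn hφ (hI.inter isOpen_finsetCell)
      (inter_subset_left.trans hI0) hx fun t ht => hatt t ht.1
  choose N f hf hfv using hcell
  have hexc_att : ∀ e : F, InfAttained φ e α := fun e =>
    hatt e (hexc.mem_toFinset.1 e.2).1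
  choose M g hg hgv using hexc_att
  refine ⟨insert 1 ((⋃ P ∈ F.powerset, range (f P)) ∪ ⋃ e, range (g e)),
    ((F.powerset.finite_toSet.biUnion fun P _ => finite_range _).union
      (finite_iUnion fun e => finite_range _)).insert 1, mem_insert _ _, fun t ht => ?_⟩
  by_cases htF : t ∈ F
  · exact replaces_of_eq hφ (fun i => mem_insert_of_mem _ <| Or.inr <|
      mem_iUnion.2 ⟨⟨t, htF⟩, mem_range_self i⟩) (hg ⟨t, htF⟩) (hgv ⟨t, htF⟩)
  · have hP : F.filter (· < t) ∈ F.powerset := Finset.mem_powerset.2 (Finset.filter_subset _ _)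
    exact replaces_of_eq hφ (fun i => mem_insert_of_mem _ <| Or.inl <|
      mem_biUnion hP (mem_range_self i)) (hf _) (hfv _ t ⟨ht, mem_finsetCell_filter_lt htF⟩)

theorem exists_finite_isLeast_of_replaces (hφ : ∀ g, 0 ≤ φ g) {S : Set G} (hS : (φ '' S).Finite)
    (hI0 : I ⊆ Ioi 0) (hrep : ∀ t ∈ I, Replaces φ t α S) :
    ∃ 𝒳 : Set (ℕ →₀ ℝ), 𝒳.Finite ∧
      ∀ t ∈ I, IsLeast ((fun x => ltNorm x t) '' 𝒳) (metricVersion φ t α) := by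
  classical
  set V := hS.toFinset
  have hSV : ∀ g ∈ S, φ g ∈ V := fun g hg => hS.mem_toFinset.2 (mem_image_of_mem φ hg)
  set Q := {q : Σ N : ℕ, Fin (N + 1) → G | (∀ i, q.2 i ∈ S) ∧ α = ∏ i, q.2 i}
  let κ : (Σ N : ℕ, Fin (N + 1) → G) → V → ℕ := fun q => valueCount V (φ ∘ q.2)
  have hA : (κ '' Q).IsPWO := isPWO_of_wellQuasiOrderedLE _
  choose! q hqQ hqκ using fun m (hm : Minimal (· ∈ κ '' Q) m) => hm.prop
  refine ⟨(fun m => finToSeq (φ ∘ (q m).2)) '' {m | Minimal (· ∈ κ '' Q) m},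
    hA.finite_setOf_minimal.image _, fun t ht => ?_⟩
  have ht0 : 0 < t := hI0 ht
  have hV : ∀ v ∈ V, 0 ≤ v := fun v hv => by
    obtain ⟨g, -, rfl⟩ := hS.mem_toFinset.1 hv
    exact hφ g
  set w : (V → ℕ) → ℝ := fun m => (∑ v : V, (m v : ℝ) * (v : ℝ) ^ t) ^ (1 / t)
  have hval : ∀ p ∈ Q, (∑ i, φ (p.2 i) ^ t) ^ (1 / t) = w (κ p) := fun p hp => by
    congr 1
    exact sum_comp_eq_sum_valueCount (fun i => hSV _ (hp.1 i)) (· ^ t)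
  have hvals : {x | ∃ (N : ℕ) (f : Fin (N + 1) → G), (∀ i, f i ∈ S) ∧ α = ∏ i, f i ∧
      x = (∑ i, φ (f i) ^ t) ^ (1 / t)} = w '' (κ '' Q) := by
    ext x
    constructor
    · rintro ⟨N, f, hfS, hf, rfl⟩
      exact ⟨_, ⟨⟨N, f⟩, ⟨hfS, hf⟩, rfl⟩, (hval ⟨N, f⟩ ⟨hfS, hf⟩).symm⟩
    · rintro ⟨_, ⟨⟨N, f⟩, hp, rfl⟩, rfl⟩
      exact ⟨N, f, hp.1, hp.2, (hval _ hp).symm⟩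
  have hglb : IsGLB (w '' (κ '' Q)) (metricVersion φ t α) := hvals ▸ hrep t ht
  have himg : (fun x => ltNorm x t) '' ((fun m => finToSeq (φ ∘ (q m).2)) ''
      {m | Minimal (· ∈ κ '' Q) m}) = w '' {m | Minimal (· ∈ κ '' Q) m} := by
    rw [image_image]
    refine image_congr fun m hm => ?_
    exact (ltNorm_finToSeq (fun i => hφ _) ht0.ne').trans
      ((hval _ (hqQ m hm)).trans (congrArg w (hqκ m hm)))
  rw [himg]
  exact hglb.isLeast_image_minimal hA ((monotone_sum_mul_rpow hV ht0).monotoneOn _)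

end Implications

theorem uniformReplacements_tfae_general {G : Type*} [CommGroup G] [Countable G]
    (φ : G → ℝ) (hφ : IsHeight φ) (α : G) (a : ℝ) (b : EReal) (ha : 0 ≤ a)
    (hatt : ∀ t : ℝ, a < t → (t : EReal) < b → InfAttained φ t α) :
    List.TFAE [
      ∃ 𝒳 : Set (ℕ →₀ ℝ), 𝒳.Finite ∧ ∀ t : ℝ, a < t → (t : EReal) < b →
        IsLeast ((fun x => ltNorm x t) '' 𝒳) (metricVersion φ t α),
      {t : ℝ | a < t ∧ (t : EReal) < b ∧
        ¬ IsStandardPt φ α {s : ℝ | a < s ∧ (s : EReal) < b} t}.Finite,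
      ∃ R : Set G, R.Finite ∧ (1 : G) ∈ R ∧
        ∀ t : ℝ, a < t → (t : EReal) < b → Replaces φ t α R,
      ∃ S : Set G, (1 : G) ∈ S ∧ (φ '' S).Finite ∧
        ∀ t : ℝ, a < t → (t : EReal) < b → Replaces φ t α S] := by
  set I := {s : ℝ | a < s ∧ (s : EReal) < b}
  have hI_eq : I = (↑) ⁻¹' Ioo (a : EReal) b := by ext; simp [I, EReal.coe_lt_coe_iff]
  have hI : IsOpen I := hI_eq ▸ isOpen_Ioo.preimage continuous_coe_real_ereal
  have hIc : I.OrdConnected := hI_eq ▸ ordConnected_Ioo.preimage_mono EReal.coe_strictMono.monotone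
  have hI0 : I ⊆ Ioi 0 := fun s hs => ha.trans_lt hs.1
  tfae_have 1 → 2
  | ⟨𝒳, h𝒳, hmin⟩ => (finite_exceptional_of_isLeast hI hI0 h𝒳 fun t ht => hmin t ht.1 ht.2).subset
      fun t ⟨h₁, h₂, h₃⟩ => ⟨⟨h₁, h₂⟩, h₃⟩
  tfae_have 2 → 3 := fun hexc => by
    obtain ⟨R, hR, h1R, hrep⟩ := exists_finite_replaces_of_finite_exceptional hφ.1 hI hIc hI0
      (fun t ht => hatt t ht.1 ht.2) (hexc.subset fun t ⟨⟨h₁, h₂⟩, h₃⟩ => ⟨h₁, h₂, h₃⟩)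
    exact ⟨R, hR, h1R, fun t h₁ h₂ => hrep t ⟨h₁, h₂⟩⟩
  tfae_have 3 → 4
  | ⟨R, hR, h1R, hrep⟩ => ⟨R, h1R, hR.image φ, hrep⟩
  tfae_have 4 → 1 := fun ⟨S, _, hS, hrep⟩ => by
    obtain ⟨𝒳, h𝒳, hmin⟩ := exists_finite_isLeast_of_replaces hφ.1 hS hI0
      fun t ht => hrep t ht.1 ht.2
    exact ⟨𝒳, h𝒳, fun t h₁ h₂ => hmin t ⟨h₁, h₂⟩⟩
  tfae_finish

/-- Theorem (main result).  Let `G` be a countable abelian group, `φ` a height on `G`,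
`α ∈ G`, and `I = (a,b) ⊆ (0,∞)` an open interval (with `b ≤ ∞` allowed) such that the
infimum in the definition of `φ_t(α)` is attained for every `t ∈ I`.  The following are
equivalent:
(i) there is a finite set `𝒳` of finitely supported real sequences with
    `φ_t(α) = min{‖x‖_t : x ∈ 𝒳}` for all `t ∈ I`;
(ii) `I` contains only finitely many exceptional points;
(iii) there is a finite set `R ⊆ G` containing the identity that replaces `G` at every `t ∈ I`;
(iv) there is a set `S ⊆ G` containing the identity, with `φ(S)` finite, that replaces `G`
     at every `t ∈ I`. -/
theorem uniformReplacements_tfae {G : Type*} [CommGroup G] [Countable G]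
    (φ : G → ℝ) (hφ : IsHeight φ) (α : G) (a : ℝ) (b : EReal) (ha : 0 ≤ a)
    (hab : (a : EReal) < b)
    (hatt : ∀ t : ℝ, a < t → (t : EReal) < b → InfAttained φ t α) :
    List.TFAE [
      ∃ 𝒳 : Set (ℕ →₀ ℝ), 𝒳.Finite ∧ ∀ t : ℝ, a < t → (t : EReal) < b →
        IsLeast ((fun x => ltNorm x t) '' 𝒳) (metricVersion φ t α),
      {t : ℝ | a < t ∧ (t : EReal) < b ∧
        ¬ IsStandardPt φ α {s : ℝ | a < s ∧ (s : EReal) < b} t}.Finite,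
      ∃ R : Set G, R.Finite ∧ (1 : G) ∈ R ∧
        ∀ t : ℝ, a < t → (t : EReal) < b → Replaces φ t α R,
      ∃ S : Set G, (1 : G) ∈ S ∧ (φ '' S).Finite ∧
        ∀ t : ℝ, a < t → (t : EReal) < b → Replaces φ t α S] :=
  uniformReplacements_tfae_general φ hφ α a b ha hatt
end
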